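/- arXiv:2601.14469 — 3 statements merged into one kernel-verified Lean document; each statement's English description precedes it below -/
import Mathlib

section
/- Let n ≥ 3 and let Ψ ∈ C²([0,∞)) be a global positive solution of (eqnPsi) such that lim_{y→∞} y² (nΨ(y) + yΨ'(y)) = L ∈ (0,∞). Then the profile U(y) := nΨ(y) + yΨ'(y) is strictly positive on [0,∞). (Key step: if n ≥ 3, Ψ(y) > 0, U(y) = yΨ'(y) + nΨ(y) = 0 and U'(y) = yΨ''(y) + (n+1)Ψ'(y) ≥ 0 at some y > 0 at which the ODE (eqnPsi) holds, then −(n−2)Ψ(y) = 2(Ψ''(y) + ((n+1)/y)Ψ'(y)) ≥ 0, a contradiction.) -/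
open Real Set Filter
open scoped Topology

noncomputable section

/-- `Ψ` is a global `C²([0,∞))` solution of (eqnPsi):
`Ψ'' + ((n+1)/y - y/2)Ψ' - Ψ + Ψ(yΨ' + nΨ) = 0` on `(0,∞)`, `Ψ'(0) = 0`. -/
structure IsEqnPsiSol (n : ℕ) (Ψ : ℝ → ℝ) : Prop where
  diff1 : ∀ y ∈ Ici (0:ℝ), DifferentiableAt ℝ Ψ y
  diff2 : ∀ y ∈ Ici (0:ℝ), DifferentiableAt ℝ (deriv Ψ) y
  cont2 : ContinuousOn (deriv (deriv Ψ)) (Ici (0:ℝ))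
  init0 : deriv Ψ 0 = 0
  ode : ∀ y : ℝ, 0 < y →
    deriv (deriv Ψ) y + (((n : ℝ) + 1) / y - y / 2) * deriv Ψ y - Ψ y
      + Ψ y * (y * deriv Ψ y + (n : ℝ) * Ψ y) = 0

/-!
At a zero `y > 0` of the profile `U = nΨ + yΨ'` the ODE gives
`U'(y) = (n+1)Ψ'(y) + yΨ''(y) = -(n-2)/2 · yΨ(y) < 0`, so `U` can only cross zero downwards.
Since `y²U(y) → L > 0`, `U` is eventually positive; if `U` were nonpositive somewhere, its last
zero would be a point where `U` becomes positive to the right, forcing `U' ≥ 0` there.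
-/

def psiProfile (n : ℕ) (Ψ : ℝ → ℝ) (y : ℝ) : ℝ := n * Ψ y + y * deriv Ψ y

theorem hasDerivAt_psiProfile {n : ℕ} {Ψ : ℝ → ℝ} {y : ℝ} (h₁ : DifferentiableAt ℝ Ψ y)
    (h₂ : DifferentiableAt ℝ (deriv Ψ) y) :
    HasDerivAt (psiProfile n Ψ) (((n : ℝ) + 1) * deriv Ψ y + y * deriv (deriv Ψ) y) y := by
  have h := (h₁.hasDerivAt.const_mul (n : ℝ)).add ((hasDerivAt_id y).mul h₂.hasDerivAt)
  refine h.congr_deriv ?_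
  simp only [id_eq]
  ring

theorem IsEqnPsiSol.deriv_psiProfile_of_psiProfile_eq_zero {n : ℕ} {Ψ : ℝ → ℝ}
    (hΨ : IsEqnPsiSol n Ψ) {y : ℝ} (hy : 0 < y) (h₀ : psiProfile n Ψ y = 0) :
    ((n : ℝ) + 1) * deriv Ψ y + y * deriv (deriv Ψ) y = -(((n : ℝ) - 2) / 2 * y * Ψ y) := by
  have hode := hΨ.ode y hy
  unfold psiProfile at h₀
  rw [show y * deriv Ψ y + n * Ψ y = 0 by linarith, mul_zero, add_zero] at hode
  have hΨ'' : deriv (deriv Ψ) y = Ψ y - ((n + 1) / y - y / 2) * deriv Ψ y := by linarith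
  rw [hΨ'']
  field_simp
  linear_combination y * h₀

theorem exists_last_zero_of_eventually_pos {f : ℝ → ℝ} {a : ℝ} (hf : ContinuousOn f (Ici a))
    (ha : f a ≤ 0) (hev : ∀ᶠ y in atTop, 0 < f y) :
    ∃ b, a ≤ b ∧ f b = 0 ∧ ∀ z, b < z → 0 < f z := by
  obtain ⟨R, hR⟩ := eventually_atTop.mp hev
  let S := Icc a (max a R) ∩ f ⁻¹' Iic 0
  have hS : IsCompact S :=
    isCompact_Icc.of_isClosed_subset ((hf.mono Icc_subset_Ici_self).preimage_isClosed_of_isClosed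
      isClosed_Icc isClosed_Iic) inter_subset_left
  obtain ⟨b, ⟨⟨hab, -⟩, hb⟩, hmax⟩ :=
    hS.exists_isGreatest ⟨a, ⟨left_mem_Icc.mpr (le_max_left a R), ha⟩⟩
  have hright : ∀ z, b < z → 0 < f z := by
    intro z hz
    by_contra hfz
    rcases le_or_gt z (max a R) with hzR | hzR
    · exact hz.not_ge (hmax ⟨⟨hab.trans hz.le, hzR⟩, not_lt.mp hfz⟩)
    · exact hfz (hR z ((le_max_right a R).trans hzR.le))
  refine ⟨b, hab, le_antisymm hb ?_, hright⟩
  refine ge_of_tendsto ((hf b hab).mono (Ioi_subset_Ici hab)) ?_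
  filter_upwards [self_mem_nhdsWithin] with z hz using (hright z hz).le

theorem HasDerivAt.nonneg_of_forall_lt_imp_le {f : ℝ → ℝ} {f' b : ℝ} (hf : HasDerivAt f f' b)
    (h : ∀ z, b < z → f b ≤ f z) : 0 ≤ f' := by
  refine ge_of_tendsto hf.tendsto_slope_zero_right ?_
  filter_upwards [self_mem_nhdsWithin] with t (ht : 0 < t)
  exact smul_nonneg (inv_nonneg.mpr ht.le) (sub_nonneg.mpr (h _ (lt_add_of_pos_right b ht)))

theorem pos_of_hasDerivAt_neg_of_eq_zero {f : ℝ → ℝ} {a : ℝ} (hf : ContinuousOn f (Ici a))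
    (hev : ∀ᶠ y in atTop, 0 < f y)
    (hzero : ∀ y, a ≤ y → f y = 0 → ∃ f', HasDerivAt f f' y ∧ f' < 0) : 0 < f a := by
  by_contra! ha
  obtain ⟨b, hab, hb, hright⟩ := exists_last_zero_of_eventually_pos hf ha hev
  obtain ⟨f', hf', hneg⟩ := hzero b hab hb
  have : 0 ≤ f' := hf'.nonneg_of_forall_lt_imp_le fun z hz => hb ▸ (hright z hz).le
  exact hneg.not_ge this

/-- positivity of self-similar profiles, cf. (posU).
Let `n ≥ 3` and let `Ψ ∈ C²([0,∞))` be a global positive solution of (eqnPsi) with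
`y²(nΨ(y) + yΨ'(y)) → L ∈ (0,∞)` as `y → ∞`. Then the profile
`U(y) = nΨ(y) + yΨ'(y)` is strictly positive on `[0,∞)`. -/
theorem statement4
    (n : ℕ) (hn3 : 3 ≤ n)
    (Ψ : ℝ → ℝ) (hΨ : IsEqnPsiSol n Ψ)
    (hpos : ∀ y : ℝ, 0 ≤ y → 0 < Ψ y)
    (L : ℝ) (hL : 0 < L)
    (hlim : Tendsto (fun y : ℝ => y ^ 2 * ((n : ℝ) * Ψ y + y * deriv Ψ y))
      atTop (𝓝 L)) :
    ∀ y : ℝ, 0 ≤ y → 0 < (n : ℝ) * Ψ y + y * deriv Ψ y := by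
  intro y hy
  have hn : (2 : ℝ) < n := by exact_mod_cast hn3
  have hderiv : ∀ z, 0 ≤ z → HasDerivAt (psiProfile n Ψ)
      (((n : ℝ) + 1) * deriv Ψ z + z * deriv (deriv Ψ) z) z := fun z hz =>
    hasDerivAt_psiProfile (hΨ.diff1 z hz) (hΨ.diff2 z hz)
  rcases hy.eq_or_lt with rfl | hy
  · simpa using mul_pos (by linarith : (0 : ℝ) < n) (hpos 0 le_rfl)
  refine pos_of_hasDerivAt_neg_of_eq_zero (a := y)
    (fun z hz => (hderiv z (hy.le.trans hz)).continuousAt.continuousWithinAt) ?_ ?_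
  · filter_upwards [hlim.eventually (lt_mem_nhds hL)] with z hz
    exact pos_of_mul_pos_right hz (sq_nonneg z)
  · intro z hyz hz
    have hz0 : 0 < z := hy.trans_le hyz
    refine ⟨_, hderiv z hz0.le, ?_⟩
    rw [hΨ.deriv_psiProfile_of_psiProfile_eq_zero hz0 hz, neg_lt_zero]
    exact mul_pos (mul_pos (by linarith) hz0) (hpos z hz0.le)
end
end

section
/- Let n ≥ 3 and let V ∈ C²((0,∞)) satisfy V''(r) + ((n+1)/r) V'(r) + n V²(r) + r V(r) V'(r) = 0 and V(r) ≥ 0 for all r ∈ (0,∞). Then for every ε > 0 there exists a constant C = C(ε) > 0 such that V(r) ≤ C r^{-2} for all r ∈ (ε,∞). -/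
/-!
In the variable `t = log r` the function `w = r² V` solves the autonomous system
`w' = u`, `u' = -(c - 2 + w) u - c w (w - 2)` with `c = n - 2 ≥ 1`. This system has the
Lyapunov function `L = (u + w²/2 - w)²/2 + (3c - 1)/6 · (w³ - 3w²)`, whose derivative along
solutions is `-(c - 1) u² - c w² (w - 2)²/2 ≤ 0`. Hence the cubic `w³ - 3w²` stays below a
multiple of `L(log ε)` for `t ≥ log ε`, which bounds `r² V(r)` on `(ε, ∞)`.
-/

open Real

section Lyapunov

variable {c : ℝ} {w u : ℝ → ℝ}

-- Shifting `u` by `w²/2 - w` gives `(u + w²/2 - w)' = -(c - 1) u - c w (w - 2)`; the cubic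
-- term is then chosen so that all terms linear in `u` cancel.
noncomputable def lyapunov (c w u : ℝ) : ℝ :=
  (u + w ^ 2 / 2 - w) ^ 2 / 2 + (3 * c - 1) / 6 * (w ^ 3 - 3 * w ^ 2)

lemma hasDerivAt_lyapunov (hw : ∀ t, HasDerivAt w (u t) t)
    (hu : ∀ t, HasDerivAt u (-(c - 2 + w t) * u t - c * w t * (w t - 2)) t) (t : ℝ) :
    HasDerivAt (fun s => lyapunov c (w s) (u s))
      (-(c - 1) * u t ^ 2 - c * w t ^ 2 * (w t - 2) ^ 2 / 2) t := by
  have hp := ((hu t).fun_add (((hw t).fun_pow 2).div_const 2)).fun_sub (hw t)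
  have hq := ((hw t).fun_pow 3).fun_sub (((hw t).fun_pow 2).const_mul 3)
  exact ((hp.fun_pow 2).div_const 2).fun_add (hq.const_mul ((3 * c - 1) / 6)) |>.congr_deriv
    (by push_cast; ring)

lemma antitone_lyapunov (hw : ∀ t, HasDerivAt w (u t) t)
    (hu : ∀ t, HasDerivAt u (-(c - 2 + w t) * u t - c * w t * (w t - 2)) t) (hc : 1 ≤ c) :
    Antitone fun t => lyapunov c (w t) (u t) := by
  refine antitone_of_deriv_nonpos (fun t => (hasDerivAt_lyapunov hw hu t).differentiableAt)
    fun t => ?_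
  rw [(hasDerivAt_lyapunov hw hu t).deriv]
  have hu2 : 0 ≤ (c - 1) * u t ^ 2 := mul_nonneg (sub_nonneg.2 hc) (sq_nonneg _)
  have hw2 : 0 ≤ c * w t ^ 2 * (w t - 2) ^ 2 :=
    mul_nonneg (mul_nonneg (by linarith) (sq_nonneg _)) (sq_nonneg _)
  linarith

lemma le_max_of_cube_sub_three_mul_sq_le {x K : ℝ} (h : x ^ 3 - 3 * x ^ 2 ≤ K) :
    x ≤ max 4 K := by
  by_contra! hx
  have h4 : 4 < x := (le_max_left 4 K).trans_lt hx
  have hK : K < x := (le_max_right 4 K).trans_lt hx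
  nlinarith [mul_le_mul_of_nonneg_left (by linarith : (1 : ℝ) ≤ x - 3) (sq_nonneg x)]

lemma exists_forall_ge_le_of_hasDerivAt (hw : ∀ t, HasDerivAt w (u t) t)
    (hu : ∀ t, HasDerivAt u (-(c - 2 + w t) * u t - c * w t * (w t - 2)) t) (hc : 1 ≤ c)
    (T₀ : ℝ) : ∃ B, ∀ t, T₀ ≤ t → w t ≤ B := by
  refine ⟨max 4 (6 / (3 * c - 1) * lyapunov c (w T₀) (u T₀)), fun t ht =>
    le_max_of_cube_sub_three_mul_sq_le ?_⟩
  have hL := antitone_lyapunov hw hu hc ht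
  simp only [lyapunov] at hL ⊢
  rw [div_mul_eq_mul_div, le_div_iff₀ (by linarith)]
  nlinarith [sq_nonneg (u t + w t ^ 2 / 2 - w t)]

end Lyapunov

section LogarithmicVariable

variable {n : ℝ} {V : ℝ → ℝ}

noncomputable def logScaled (V : ℝ → ℝ) (t : ℝ) : ℝ := exp t ^ 2 * V (exp t)

noncomputable def logScaledDeriv (V : ℝ → ℝ) (t : ℝ) : ℝ :=
  2 * exp t ^ 2 * V (exp t) + exp t ^ 3 * deriv V (exp t)

lemma hasDerivAt_logScaled (hV : ∀ r, 0 < r → DifferentiableAt ℝ V r) (t : ℝ) :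
    HasDerivAt (logScaled V) (logScaledDeriv V t) t := by
  have hVexp : HasDerivAt (fun s => V (exp s)) (deriv V (exp t) * exp t) t :=
    (hV _ (exp_pos t)).hasDerivAt.comp t (hasDerivAt_exp t)
  exact (((hasDerivAt_exp t).fun_pow 2).fun_mul hVexp).congr_deriv
    (by simp only [logScaledDeriv]; push_cast; ring)

lemma hasDerivAt_logScaledDeriv
    (hdiff : ∀ r, 0 < r → DifferentiableAt ℝ V r ∧ DifferentiableAt ℝ (deriv V) r)
    (hode : ∀ r, 0 < r →
      deriv (deriv V) r + ((n + 1) / r) * deriv V r + n * V r ^ 2 + r * V r * deriv V r = 0)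
    (t : ℝ) :
    HasDerivAt (logScaledDeriv V)
      (-(n - 2 - 2 + logScaled V t) * logScaledDeriv V t
        - (n - 2) * logScaled V t * (logScaled V t - 2)) t := by
  have hV : HasDerivAt (fun s => V (exp s)) (deriv V (exp t) * exp t) t :=
    (hdiff _ (exp_pos t)).1.hasDerivAt.comp t (hasDerivAt_exp t)
  have hV' : HasDerivAt (fun s => deriv V (exp s)) (deriv (deriv V) (exp t) * exp t) t :=
    (hdiff _ (exp_pos t)).2.hasDerivAt.comp t (hasDerivAt_exp t)
  have h := ((((hasDerivAt_exp t).fun_pow 2).const_mul 2).fun_mul hV).fun_add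
    (((hasDerivAt_exp t).fun_pow 3).fun_mul hV')
  refine h.congr_deriv ?_
  have hV'' : deriv (deriv V) (exp t) = -((n + 1) / exp t * deriv V (exp t)
      + n * V (exp t) ^ 2 + exp t * V (exp t) * deriv V (exp t)) := by
    linarith [hode _ (exp_pos t)]
  simp only [logScaled, logScaledDeriv, hV'']
  push_cast
  field_simp
  ring

end LogarithmicVariable

theorem statement16_general
    (n : ℕ) (hn3 : 3 ≤ n)
    (V : ℝ → ℝ)
    (hdiff : ∀ r : ℝ, 0 < r → DifferentiableAt ℝ V r ∧ DifferentiableAt ℝ (deriv V) r)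
    (hode : ∀ r : ℝ, 0 < r →
      deriv (deriv V) r + (((n : ℝ) + 1) / r) * deriv V r + (n : ℝ) * V r ^ 2
        + r * V r * deriv V r = 0) :
    ∀ ε : ℝ, 0 < ε → ∃ C : ℝ, 0 < C ∧ ∀ r : ℝ, ε < r → V r ≤ C / r ^ 2 := by
  intro ε hε
  have hc : (1 : ℝ) ≤ n - 2 := by
    have : (3 : ℝ) ≤ n := by exact_mod_cast hn3
    linarith
  obtain ⟨B, hB⟩ := exists_forall_ge_le_of_hasDerivAt
    (hasDerivAt_logScaled fun r hr => (hdiff r hr).1) (hasDerivAt_logScaledDeriv hdiff hode)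
    hc (log ε)
  refine ⟨max B 1, by positivity, fun r hr => ?_⟩
  have hr0 : 0 < r := hε.trans hr
  have hwr : r ^ 2 * V r ≤ B := by
    simpa only [logScaled, exp_log hr0] using hB (log r) (log_le_log hε hr.le)
  rw [le_div_iff₀ (by positivity)]
  linarith [le_max_left B 1]

/-- Lemma 6.7: quadratic decay of nonnegative radial steady states.
Let `n ≥ 3` and let `V ∈ C²((0,∞))` satisfy `V'' + ((n+1)/r)V' + nV² + rVV' = 0`
and `V ≥ 0` on `(0,∞)`. Then for every `ε > 0` there is `C = C(ε) > 0` with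
`V(r) ≤ C r⁻²` on `(ε,∞)`. -/
theorem statement16
    (n : ℕ) (hn3 : 3 ≤ n)
    (V : ℝ → ℝ)
    (hdiff : ∀ r : ℝ, 0 < r → DifferentiableAt ℝ V r ∧ DifferentiableAt ℝ (deriv V) r)
    (hode : ∀ r : ℝ, 0 < r →
      deriv (deriv V) r + (((n : ℝ) + 1) / r) * deriv V r + (n : ℝ) * V r ^ 2
        + r * V r * deriv V r = 0)
    (hnn : ∀ r : ℝ, 0 < r → 0 ≤ V r) :
    ∀ ε : ℝ, 0 < ε → ∃ C : ℝ, 0 < C ∧ ∀ r : ℝ, ε < r → V r ≤ C / r ^ 2 :=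
  statement16_general n hn3 V hdiff hode
end

section
/- Let n ≥ 3 and let W₁ be the maximal solution of the initial value problem W'' + ((n+1)/r) W' + n W² + r W W' = 0, W(0) = 1, W'(0) = 0, defined on its maximal existence interval [0, r̄). Then r̄ = ∞ (the solution is global), W₁(r) > 0 for all r ≥ 0, and W₁'(r) ≤ 0 for all r ≥ 0. (Key steps: Z := nW₁ + rW₁' satisfies Z' = −rW₁Z with Z(0) = n > 0, hence Z > 0 and (rⁿW₁)' ≥ 0 so W₁ > 0; and (r^{n+1}W₁')' = −r^{n+1}W₁Z ≤ 0 gives W₁' ≤ 0, so W₁ is bounded and the solution extends globally.) -/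
/-!
Write `Z = nW + rW'`, the density whose averaged mass is `W`. The equation says exactly
`Z' = -rWZ`, so `Z` cannot vanish and stays positive since `Z(0) = n`. Then
`(rⁿW)' = rⁿ⁻¹Z > 0` gives `W > 0`, and `(rⁿ⁺¹W')' = -rⁿ⁺¹WZ ≤ 0` gives `W' ≤ 0`. Hence `W` and
`Z` are antitone and positive, so if `r̄` were finite, `W` and `W'` would have limits at `r̄`.
The equation is regular at `r̄ > 0`, and its local solution through these limits glues with `W`
into a `C²` solution beyond `r̄`, contradicting maximality.
-/

open Real Set Filter
open scoped ENNReal Topology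

noncomputable section

/-- `W` is a `C²` solution on `[0,b)` (with `b ∈ (0,∞]`) of the steady-state equation
`W'' + ((n+1)/r)W' + nW² + rWW' = 0` with `W(0) = 1`, `W'(0) = 0`. -/
def IsW1SolOn (n : ℕ) (b : ℝ≥0∞) (W : ℝ → ℝ) : Prop :=
  W 0 = 1 ∧ deriv W 0 = 0 ∧
    (∀ r : ℝ, 0 ≤ r → ENNReal.ofReal r < b →
      DifferentiableAt ℝ W r ∧ DifferentiableAt ℝ (deriv W) r) ∧
    ∀ r : ℝ, 0 < r → ENNReal.ofReal r < b →
      deriv (deriv W) r + (((n : ℝ) + 1) / r) * deriv W r + (n : ℝ) * W r ^ 2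
        + r * W r * deriv W r = 0

theorem pos_of_hasDerivWithinAt_mul_self {f g : ℝ → ℝ} {a b : ℝ}
    (hg : ContinuousOn g (Icc a b)) (hf : ContinuousOn f (Icc a b))
    (hf' : ∀ t ∈ Ioc a b, HasDerivWithinAt f (g t * f t) (Iic t) t) (ha : 0 < f a) :
    ∀ t ∈ Icc a b, 0 < f t := by
  obtain ⟨C, hC⟩ := isCompact_Icc.exists_bound_of_continuousOn hg
  by_contra! ⟨t, ht, hft⟩
  obtain ⟨s, hs, hfs⟩ : ∃ s ∈ Icc a t, f s = 0 :=
    intermediate_value_Icc' ht.1 (hf.mono (Icc_subset_Icc_right ht.2)) ⟨hft, ha.le⟩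
  have hsb : Icc a s ⊆ Icc a b := Icc_subset_Icc_right (hs.2.trans ht.2)
  have hLip : ∀ u ∈ Ioc a s, LipschitzWith C.toNNReal (fun z : ℝ => g u * z) := fun u hu =>
    (lipschitzWith_smul (g u)).weaken <| by
      rw [← NNReal.coe_le_coe, coe_nnnorm, Real.coe_toNNReal']
      exact (hC u (hsb (Ioc_subset_Icc_self hu))).trans (le_max_left _ _)
  -- `f` and `0` solve the same linear equation and agree at `s`, hence also at `a`
  have hzero : EqOn f (fun _ => 0) (Icc a s) :=
    ODE_solution_unique_of_mem_Icc_left (v := fun u z => g u * z) (s := fun _ => univ)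
      (fun u hu => (hLip u hu).lipschitzOnWith) (hf.mono hsb)
      (fun u hu => hf' u ⟨hu.1, hu.2.trans (hs.2.trans ht.2)⟩) (fun _ _ => trivial)
      continuousOn_const (fun u _ => by simpa using hasDerivWithinAt_const u _ (0 : ℝ))
      (fun _ _ => trivial) hfs
  exact ha.ne' (hzero ⟨le_rfl, hs.1⟩)

theorem hasDerivAt_pow_succ_mul {f : ℝ → ℝ} {f' t : ℝ} (k : ℕ) (hf : HasDerivAt f f' t) :
    HasDerivAt (fun s => s ^ (k + 1) * f s) (t ^ k * ((k + 1) * f t + t * f')) t := by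
  refine ((hasDerivAt_pow (k + 1) t).mul hf).congr_deriv ?_
  push_cast
  ring

theorem if_lt_eventuallyEq_of_lt {α : Type*} {f g : ℝ → α} {ρ t : ℝ} (ht : t < ρ) :
    (fun s => if s < ρ then f s else g s) =ᶠ[𝓝 t] f := by
  filter_upwards [Iio_mem_nhds ht] with s hs using if_pos hs

theorem if_lt_eventuallyEq_of_gt {α : Type*} {f g : ℝ → α} {ρ t : ℝ} (ht : ρ < t) :
    (fun s => if s < ρ then f s else g s) =ᶠ[𝓝 t] g := by
  filter_upwards [Ioi_mem_nhds ht] with s hs using if_neg (not_lt.2 hs.le)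

theorem hasDerivAt_if_lt {f g f' : ℝ → ℝ} {ρ L : ℝ}
    (hf : ∀ᶠ t in 𝓝[<] ρ, HasDerivAt f (f' t) t) (hf_lim : Tendsto f (𝓝[<] ρ) (𝓝 (g ρ)))
    (hf'_lim : Tendsto f' (𝓝[<] ρ) (𝓝 L)) (hg : HasDerivAt g L ρ) :
    HasDerivAt (fun t => if t < ρ then f t else g t) L ρ := by
  set h := fun t => if t < ρ then f t else g t
  have hhf : ∀ᶠ t in 𝓝[<] ρ, h =ᶠ[𝓝 t] f := by
    filter_upwards [self_mem_nhdsWithin] with t ht using if_lt_eventuallyEq_of_lt ht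
  obtain ⟨s, hs, hsf⟩ := (hf.and hhf).exists_mem
  have hleft : HasDerivWithinAt h L (Iic ρ) ρ := by
    refine hasDerivWithinAt_Iic_of_tendsto_deriv (s := s ∩ Iio ρ)
      (fun t ht => ((hsf t ht.1).1.congr_of_eventuallyEq (hsf t ht.1).2).differentiableAt
        |>.differentiableWithinAt) ?_ (inter_mem hs self_mem_nhdsWithin) ?_
    · rw [ContinuousWithinAt, show h ρ = g ρ from if_neg (lt_irrefl ρ)]
      refine (hf_lim.congr' ?_).mono_left (nhdsWithin_mono _ inter_subset_right)
      filter_upwards [self_mem_nhdsWithin] with t ht using (if_pos ht).symm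
    · refine hf'_lim.congr' ?_
      filter_upwards [hf.and hhf] with t ht
      exact ((ht.1.congr_of_eventuallyEq ht.2).deriv).symm
  have hright : HasDerivWithinAt h L (Ici ρ) ρ :=
    hg.hasDerivWithinAt.congr_of_mem (fun t ht => if_neg (not_lt.2 ht)) self_mem_Ici
  simpa [Iic_union_Ici] using hleft.union hright

theorem ContDiffAt.exists_local_solution_second_order {G : ℝ × ℝ × ℝ → ℝ} {t₀ w₀ p₀ : ℝ}
    (hG : ContDiffAt ℝ 1 G (t₀, w₀, p₀)) :
    ∃ φ χ : ℝ → ℝ, φ t₀ = w₀ ∧ χ t₀ = p₀ ∧ ∃ ε > 0, ∀ t ∈ Ioo (t₀ - ε) (t₀ + ε),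
      HasDerivAt φ (χ t) t ∧ HasDerivAt χ (G (t, φ t, χ t)) t := by
  -- the time is adjoined as a first coordinate to make the system autonomous
  set F : ℝ × ℝ × ℝ → ℝ × ℝ × ℝ := fun x => (1, x.2.2, G x)
  have hF : ContDiffAt ℝ 1 F (t₀, w₀, p₀) :=
    contDiffAt_const.prodMk ((contDiff_snd.comp contDiff_snd).contDiffAt.prodMk hG)
  obtain ⟨α, hα₀, ε, hε, hα⟩ :=
    hF.exists_forall_mem_closedBall_exists_eq_forall_mem_Ioo_hasDerivAt₀ t₀
  have hfst : ∀ t ∈ Ioo (t₀ - ε) (t₀ + ε), (α t).1 = t := by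
    have hd : ∀ t ∈ Ioo (t₀ - ε) (t₀ + ε), HasDerivAt (fun t => (α t).1) 1 t := fun t ht =>
      (hasFDerivAt_fst.comp_hasDerivAt t (hα t ht) :)
    refine isOpen_Ioo.eqOn_of_deriv_eq isPreconnected_Ioo
      (fun t ht => (hd t ht).differentiableAt.differentiableWithinAt)
      differentiableOn_id (fun t ht => by simp [(hd t ht).deriv])
      (x := t₀) ⟨by linarith, by linarith⟩ (by simp [hα₀])
  refine ⟨fun t => (α t).2.1, fun t => (α t).2.2, by simp [hα₀], by simp [hα₀], ε, hε,
    fun t ht => ⟨?_, ?_⟩⟩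
  · exact (hasFDerivAt_fst.comp_hasDerivAt t (hasFDerivAt_snd.comp_hasDerivAt t (hα t ht)) :)
  · have hαt : α t = (t, (α t).2.1, (α t).2.2) := Prod.ext (hfst t ht) rfl
    have := hasFDerivAt_snd.comp_hasDerivAt t (hasFDerivAt_snd.comp_hasDerivAt t (hα t ht))
    rwa [hαt] at this

def w1Rhs (n : ℕ) (x : ℝ × ℝ × ℝ) : ℝ :=
  -(((n : ℝ) + 1) / x.1) * x.2.2 - n * x.2.1 ^ 2 - x.1 * x.2.1 * x.2.2

theorem contDiffAt_w1Rhs (n : ℕ) {x : ℝ × ℝ × ℝ} (hx : x.1 ≠ 0) :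
    ContDiffAt ℝ 1 (w1Rhs n) x := by
  unfold w1Rhs
  fun_prop (disch := assumption)

/-- The density `u = r¹⁻ⁿ (rⁿ W)'` whose averaged mass is `W`. -/
def massDensity (n : ℕ) (W : ℝ → ℝ) (r : ℝ) : ℝ :=
  n * W r + r * deriv W r

namespace IsW1SolOn

variable {n : ℕ} {b : ℝ≥0∞} {W : ℝ → ℝ} {r : ℝ}

theorem hasDerivAt (h : IsW1SolOn n b W) (h0 : 0 ≤ r) (hr : ENNReal.ofReal r < b) :
    HasDerivAt W (deriv W r) r :=
  (h.2.2.1 r h0 hr).1.hasDerivAt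

theorem hasDerivAt_deriv (h : IsW1SolOn n b W) (h0 : 0 ≤ r) (hr : ENNReal.ofReal r < b) :
    HasDerivAt (deriv W) (deriv (deriv W) r) r :=
  (h.2.2.1 r h0 hr).2.hasDerivAt

theorem deriv_deriv_eq (h : IsW1SolOn n b W) (h0 : 0 < r) (hr : ENNReal.ofReal r < b) :
    deriv (deriv W) r = w1Rhs n (r, W r, deriv W r) := by
  have := h.2.2.2 r h0 hr
  simp only [w1Rhs]
  linarith

theorem hasDerivAt_massDensity (h : IsW1SolOn n b W) (h0 : 0 < r)
    (hr : ENNReal.ofReal r < b) :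
    HasDerivAt (massDensity n W) (-(r * W r) * massDensity n W r) r := by
  refine (((h.hasDerivAt h0.le hr).const_mul (n : ℝ)).add
    ((hasDerivAt_id r).mul (h.hasDerivAt_deriv h0.le hr))).congr_deriv ?_
  rw [h.deriv_deriv_eq h0 hr, w1Rhs, id, massDensity]
  field_simp
  ring

theorem massDensity_pos (h : IsW1SolOn n b W) (hn : 1 ≤ n) (h0 : 0 ≤ r)
    (hr : ENNReal.ofReal r < b) : 0 < massDensity n W r := by
  have hsub : ∀ t ∈ Icc 0 r, ENNReal.ofReal t < b := fun t ht =>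
    (ENNReal.ofReal_le_ofReal ht.2).trans_lt hr
  refine pos_of_hasDerivWithinAt_mul_self (g := fun t => -(t * W t)) ?_ ?_
    (fun t ht => (h.hasDerivAt_massDensity ht.1 (hsub t (Ioc_subset_Icc_self ht))).hasDerivWithinAt)
    ?_ r ⟨h0, le_rfl⟩
  · exact fun t ht => (continuousAt_id.mul (h.hasDerivAt ht.1 (hsub t ht)).continuousAt).neg
      |>.continuousWithinAt
  · exact fun t ht => ((continuousAt_const.mul (h.hasDerivAt ht.1 (hsub t ht)).continuousAt).add
      (continuousAt_id.mul (h.hasDerivAt_deriv ht.1 (hsub t ht)).continuousAt)).continuousWithinAt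
  · simp [massDensity, h.1, h.2.1]
    exact_mod_cast hn

theorem pos (h : IsW1SolOn n b W) (hn : 1 ≤ n) (h0 : 0 ≤ r) (hr : ENNReal.ofReal r < b) :
    0 < W r := by
  obtain ⟨k, rfl⟩ := Nat.exists_eq_add_of_le' hn
  rcases h0.eq_or_lt with rfl | hr0
  · simp [h.1]
  have hsub : ∀ t ∈ Icc 0 r, ENNReal.ofReal t < b := fun t ht =>
    (ENNReal.ofReal_le_ofReal ht.2).trans_lt hr
  have hP : StrictMonoOn (fun t => t ^ (k + 1) * W t) (Icc 0 r) := by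
    refine strictMonoOn_of_hasDerivWithinAt_pos (convex_Icc 0 r)
      (f' := fun t => t ^ k * ((k + 1) * W t + t * deriv W t))
      (fun t ht => (((continuous_pow _).continuousAt).mul
        (h.hasDerivAt ht.1 (hsub t ht)).continuousAt).continuousWithinAt)
      (fun t ht => ?_) (fun t ht => ?_)
    · rw [interior_Icc] at ht
      exact (hasDerivAt_pow_succ_mul k (h.hasDerivAt ht.1.le (hsub t (Ioo_subset_Icc_self ht))))
        |>.hasDerivWithinAt
    · rw [interior_Icc] at ht
      have := h.massDensity_pos hn ht.1.le (hsub t (Ioo_subset_Icc_self ht))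
      rw [massDensity] at this
      push_cast at this
      exact mul_pos (pow_pos ht.1 k) this
  have : (0 : ℝ) ^ (k + 1) * W 0 < r ^ (k + 1) * W r := hP ⟨le_rfl, h0⟩ ⟨h0, le_rfl⟩ hr0
  rw [zero_pow k.succ_ne_zero, zero_mul] at this
  exact pos_of_mul_pos_right this (pow_pos hr0 _).le

theorem deriv_nonpos (h : IsW1SolOn n b W) (hn : 1 ≤ n) (h0 : 0 ≤ r)
    (hr : ENNReal.ofReal r < b) : deriv W r ≤ 0 := by
  rcases h0.eq_or_lt with rfl | hr0
  · exact h.2.1.le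
  have hsub : ∀ t ∈ Icc 0 r, ENNReal.ofReal t < b := fun t ht =>
    (ENNReal.ofReal_le_ofReal ht.2).trans_lt hr
  have hQ : AntitoneOn (fun t => t ^ (n + 1) * deriv W t) (Icc 0 r) := by
    refine antitoneOn_of_hasDerivWithinAt_nonpos (convex_Icc 0 r)
      (f' := fun t => t ^ n * ((n + 1) * deriv W t + t * deriv (deriv W) t))
      (fun t ht => (((continuous_pow _).continuousAt).mul
        (h.hasDerivAt_deriv ht.1 (hsub t ht)).continuousAt).continuousWithinAt)
      (fun t ht => ?_) (fun t ht => ?_)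
    · rw [interior_Icc] at ht
      exact (hasDerivAt_pow_succ_mul n
        (h.hasDerivAt_deriv ht.1.le (hsub t (Ioo_subset_Icc_self ht)))).hasDerivWithinAt
    · rw [interior_Icc] at ht
      have ht' := hsub t (Ioo_subset_Icc_self ht)
      have hQ' : (n + 1) * deriv W t + t * deriv (deriv W) t
          = -(t * W t) * massDensity n W t := by
        have := ht.1.ne'
        rw [h.deriv_deriv_eq ht.1 ht', w1Rhs, massDensity]
        field_simp
        ring
      rw [hQ']
      have := mul_pos (mul_pos ht.1 (h.pos hn ht.1.le ht')) (h.massDensity_pos hn ht.1.le ht')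
      nlinarith [pow_pos ht.1 n]
  have : r ^ (n + 1) * deriv W r ≤ (0 : ℝ) ^ (n + 1) * deriv W 0 :=
    hQ ⟨le_rfl, h0⟩ ⟨h0, le_rfl⟩ h0
  rw [zero_pow n.succ_ne_zero, zero_mul] at this
  exact nonpos_of_mul_nonpos_right this (pow_pos hr0 _)

theorem exists_tendsto_nhdsLT {ρ : ℝ} (h : IsW1SolOn n (ENNReal.ofReal ρ) W) (hn : 1 ≤ n)
    (hρ : 0 < ρ) :
    ∃ A L, Tendsto W (𝓝[<] ρ) (𝓝 A) ∧ Tendsto (deriv W) (𝓝[<] ρ) (𝓝 L) := by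
  have hmem : ∀ t ∈ Ioo 0 ρ, ENNReal.ofReal t < ENNReal.ofReal ρ := fun t ht =>
    (ENNReal.ofReal_lt_ofReal_iff hρ).2 ht.2
  have hW : AntitoneOn W (Ioo 0 ρ) := by
    refine antitoneOn_of_hasDerivWithinAt_nonpos (convex_Ioo 0 ρ) (f' := deriv W)
      (fun t ht => (h.hasDerivAt ht.1.le (hmem t ht)).continuousAt.continuousWithinAt)
      (fun t ht => ?_) (fun t ht => ?_) <;> rw [interior_Ioo] at ht
    · exact (h.hasDerivAt ht.1.le (hmem t ht)).hasDerivWithinAt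
    · exact h.deriv_nonpos hn ht.1.le (hmem t ht)
  have hZ : AntitoneOn (massDensity n W) (Ioo 0 ρ) := by
    refine antitoneOn_of_hasDerivWithinAt_nonpos (convex_Ioo 0 ρ)
      (f' := fun t => -(t * W t) * massDensity n W t)
      (fun t ht => (h.hasDerivAt_massDensity ht.1 (hmem t ht)).continuousAt.continuousWithinAt)
      (fun t ht => ?_) (fun t ht => ?_) <;> rw [interior_Ioo] at ht
    · exact (h.hasDerivAt_massDensity ht.1 (hmem t ht)).hasDerivWithinAt
    · have := mul_pos (mul_pos ht.1 (h.pos hn ht.1.le (hmem t ht)))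
        (h.massDensity_pos hn ht.1.le (hmem t ht))
      simp only [neg_mul]
      linarith
  have hWA := hW.tendsto_nhdsWithin_Ioo_left (nonempty_Ioo.2 hρ)
    ⟨0, by rintro _ ⟨t, ht, rfl⟩; exact (h.pos hn ht.1.le (hmem t ht)).le⟩
  have hZA := hZ.tendsto_nhdsWithin_Ioo_left (nonempty_Ioo.2 hρ)
    ⟨0, by rintro _ ⟨t, ht, rfl⟩; exact (h.massDensity_pos hn ht.1.le (hmem t ht)).le⟩
  refine ⟨_, _, hWA, ((hZA.sub (hWA.const_mul (n : ℝ))).div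
    (tendsto_id.mono_left nhdsWithin_le_nhds) hρ.ne').congr' ?_⟩
  filter_upwards [Ioo_mem_nhdsLT hρ] with t ht
  have := ht.1.ne'
  simp only [massDensity, Pi.div_apply, id]
  field_simp
  ring

theorem hasDerivAt_if_lt {ρ ε t : ℝ} {φ χ : ℝ → ℝ} (h : IsW1SolOn n (ENNReal.ofReal ρ) W)
    (hρ : 0 < ρ) (hε : 0 < ε)
    (hφχ : ∀ t ∈ Ioo (ρ - ε) (ρ + ε),
      HasDerivAt φ (χ t) t ∧ HasDerivAt χ (w1Rhs n (t, φ t, χ t)) t)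
    (hWφ : Tendsto W (𝓝[<] ρ) (𝓝 (φ ρ))) (hWχ : Tendsto (deriv W) (𝓝[<] ρ) (𝓝 (χ ρ)))
    (h0 : 0 ≤ t) (ht : t < ρ + ε) :
    HasDerivAt (fun s => if s < ρ then W s else φ s) (if t < ρ then deriv W t else χ t) t ∧
      HasDerivAt (fun s => if s < ρ then deriv W s else χ s)
        (if t < ρ then deriv (deriv W) t else w1Rhs n (t, φ t, χ t)) t := by
  have hmem : ∀ t < ρ, ENNReal.ofReal t < ENNReal.ofReal ρ := fun t ht =>
    (ENNReal.ofReal_lt_ofReal_iff hρ).2 ht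
  rcases lt_trichotomy t ρ with htρ | rfl | htρ
  · simp only [if_pos htρ]
    exact ⟨(h.hasDerivAt h0 (hmem t htρ)).congr_of_eventuallyEq (if_lt_eventuallyEq_of_lt htρ),
      (h.hasDerivAt_deriv h0 (hmem t htρ)).congr_of_eventuallyEq (if_lt_eventuallyEq_of_lt htρ)⟩
  · have hW_ev : ∀ᶠ s in 𝓝[<] t,
        HasDerivAt W (deriv W s) s ∧ HasDerivAt (deriv W) (deriv (deriv W) s) s ∧
          deriv (deriv W) s = w1Rhs n (s, W s, deriv W s) := by
      filter_upwards [Ioo_mem_nhdsLT hρ] with s hs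
      exact ⟨h.hasDerivAt hs.1.le (hmem s hs.2), h.hasDerivAt_deriv hs.1.le (hmem s hs.2),
        h.deriv_deriv_eq hs.1 (hmem s hs.2)⟩
    have hW'' : Tendsto (deriv (deriv W)) (𝓝[<] t) (𝓝 (w1Rhs n (t, φ t, χ t))) := by
      refine (((contDiffAt_w1Rhs n (x := (t, φ t, χ t)) hρ.ne').continuousAt.tendsto.comp
        ((tendsto_id.mono_left nhdsWithin_le_nhds).prodMk_nhds
          (hWφ.prodMk_nhds hWχ)))).congr' ?_
      filter_upwards [hW_ev] with s hs using hs.2.2.symm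
    have htmem : t ∈ Ioo (t - ε) (t + ε) := ⟨by linarith, by linarith⟩
    simp only [lt_irrefl, if_false]
    exact ⟨_root_.hasDerivAt_if_lt (hW_ev.mono fun _ h => h.1) hWφ hWχ (hφχ t htmem).1,
      _root_.hasDerivAt_if_lt (hW_ev.mono fun _ h => h.2.1) hWχ hW'' (hφχ t htmem).2⟩
  · have htmem : t ∈ Ioo (ρ - ε) (ρ + ε) := ⟨by linarith, ht⟩
    simp only [if_neg (not_lt.2 htρ.le)]
    exact ⟨(hφχ t htmem).1.congr_of_eventuallyEq (if_lt_eventuallyEq_of_gt htρ),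
      (hφχ t htmem).2.congr_of_eventuallyEq (if_lt_eventuallyEq_of_gt htρ)⟩

theorem if_lt {ρ ε : ℝ} {φ χ : ℝ → ℝ} (h : IsW1SolOn n (ENNReal.ofReal ρ) W) (hρ : 0 < ρ)
    (hε : 0 < ε)
    (hφχ : ∀ t ∈ Ioo (ρ - ε) (ρ + ε),
      HasDerivAt φ (χ t) t ∧ HasDerivAt χ (w1Rhs n (t, φ t, χ t)) t)
    (hWφ : Tendsto W (𝓝[<] ρ) (𝓝 (φ ρ))) (hWχ : Tendsto (deriv W) (𝓝[<] ρ) (𝓝 (χ ρ))) :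
    IsW1SolOn n (ENNReal.ofReal (ρ + ε)) (fun t => if t < ρ then W t else φ t) := by
  set ψ := fun t => if t < ρ then W t else φ t
  set ψ' := fun t => if t < ρ then deriv W t else χ t
  have hψ := fun t => h.hasDerivAt_if_lt (t := t) hρ hε hφχ hWφ hWχ
  have hderiv : ∀ t < ρ + ε, deriv ψ =ᶠ[𝓝 t] ψ' := by
    intro t ht
    filter_upwards [Iio_mem_nhds ht] with s hs
    rcases lt_or_ge s ρ with hsρ | hsρ
    · rw [(if_lt_eventuallyEq_of_lt hsρ).deriv_eq]
      exact (if_pos hsρ).symm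
    · exact (hψ s (hρ.le.trans hsρ) hs).1.deriv
  have hρε : ∀ t, ENNReal.ofReal t < ENNReal.ofReal (ρ + ε) → t < ρ + ε := fun t ht =>
    (ENNReal.ofReal_lt_ofReal_iff (by linarith)).1 ht
  refine ⟨(if_pos hρ).trans h.1, ?_, fun t h0 ht => ?_, fun t h0 ht => ?_⟩
  · rw [(hderiv 0 (by linarith)).eq_of_nhds]
    exact (if_pos hρ).trans h.2.1
  · exact ⟨(hψ t h0 (hρε t ht)).1.differentiableAt,
      (hψ t h0 (hρε t ht)).2.differentiableAt.congr_of_eventuallyEq (hderiv t (hρε t ht))⟩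
  · have ht' := hρε t ht
    rw [(hderiv t ht').eq_of_nhds, (hderiv t ht').deriv_eq, (hψ t h0.le ht').2.deriv]
    rcases lt_or_ge t ρ with htρ | htρ
    · simp only [ψ, ψ', if_pos htρ]
      exact h.2.2.2 t h0 ((ENNReal.ofReal_lt_ofReal_iff hρ).2 htρ)
    · simp only [ψ, ψ', if_neg (not_lt.2 htρ), w1Rhs]
      ring

theorem eq_top (h : IsW1SolOn n b W) (hn : 1 ≤ n) (hb : 0 < b)
    (hmax : ∀ b' : ℝ≥0∞, b < b' → ∀ ψ : ℝ → ℝ,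
      EqOn ψ W {r : ℝ | 0 ≤ r ∧ ENNReal.ofReal r < b} → ¬ IsW1SolOn n b' ψ) :
    b = ⊤ := by
  by_contra hne
  set ρ := b.toReal
  have hρ : 0 < ρ := ENNReal.toReal_pos hb.ne' hne
  rw [← ENNReal.ofReal_toReal hne] at h hmax
  obtain ⟨A, L, hA, hL⟩ := h.exists_tendsto_nhdsLT hn hρ
  obtain ⟨φ, χ, rfl, rfl, ε, hε, hφχ⟩ :=
    (contDiffAt_w1Rhs n (x := (ρ, A, L)) hρ.ne').exists_local_solution_second_order
  exact hmax _ ((ENNReal.ofReal_lt_ofReal_iff (by linarith)).2 (by linarith)) _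
    (fun t ht => if_pos ((ENNReal.ofReal_lt_ofReal_iff hρ).1 ht.2))
    (h.if_lt hρ hε hφχ hA hL)

end IsW1SolOn

/-- Remark 6.5: the normalized regular steady state is global,
positive and nonincreasing. If `W₁` is the maximal solution of the IVP on `[0, r̄)`,
then `r̄ = ∞`, `W₁ > 0` and `W₁' ≤ 0` on `[0,∞)`. -/
theorem statement18
    (n : ℕ) (hn3 : 3 ≤ n)
    (W : ℝ → ℝ) (rbar : ℝ≥0∞) (hrbar : 0 < rbar)
    (hsol : IsW1SolOn n rbar W)
    (hmax : ∀ b : ℝ≥0∞, rbar < b → ∀ ψ : ℝ → ℝ,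
      Set.EqOn ψ W {r : ℝ | 0 ≤ r ∧ ENNReal.ofReal r < rbar} → ¬ IsW1SolOn n b ψ) :
    rbar = ⊤ ∧ (∀ r : ℝ, 0 ≤ r → 0 < W r) ∧ (∀ r : ℝ, 0 ≤ r → deriv W r ≤ 0) := by
  have hn : 1 ≤ n := by omega
  obtain rfl := hsol.eq_top hn hrbar hmax
  exact ⟨rfl, fun r h0 => hsol.pos hn h0 ENNReal.ofReal_lt_top,
    fun r h0 => hsol.deriv_nonpos hn h0 ENNReal.ofReal_lt_top⟩
end
end
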